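/- Let n ∈ ℕ and 𝕂 = ℝ or ℂ. Let Y₀ be a connected compact Hausdorff space with more than one point, and let φ₀ : Y₀ → Y₀ be a homeomorphism which has a periodic point and such that φ₀ⁿ is transitive with respect to some point of Y₀. Then there exist a compact Hausdorff space X and an isometric shift T on C(X;𝕂) of type I₀ whose type I witness (p, φ, a) has weight a ≡ 1, such that, with 𝒩 := {𝐧_k : k ∈ ℕ} the set of isolated points determined by (p, φ), the complement X∖𝒩 has exactly n connected components containing more than one point, and each of these n components is homeomorphic to Y₀. -/

import Mathlib

open Topology

open Topology

/-- `T` is an isometric shift: an isometry whose range has codimension 1 and with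
`⋂_{n≥1} Tⁿ(E) = {0}`. -/
def IsIsometricShift {𝕜 E : Type*} [RCLike 𝕜] [NormedAddCommGroup E] [NormedSpace 𝕜 E]
    (T : E →L[𝕜] E) : Prop :=
  (∀ f, ‖T f‖ = ‖f‖) ∧
    Module.rank 𝕜 (E ⧸ LinearMap.range (T : E →ₗ[𝕜] E)) = 1 ∧
    (⋂ n : ℕ, Set.range ((⇑T)^[n + 1])) = {0}

/-- A witness that `T` is an isometric shift of type I: an isolated point `p`, a
homeomorphism `φ : X∖{p} ≃ₜ X` and a unimodular weight `a` with `T f x = a x * f (φ x)`. -/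
structure TypeIWitness {X : Type*} [TopologicalSpace X] [CompactSpace X]
    {𝕜 : Type*} [RCLike 𝕜] (T : C(X, 𝕜) →L[𝕜] C(X, 𝕜)) where
  p : X
  isolated : IsOpen ({p} : Set X)
  φ : {x : X // x ≠ p} ≃ₜ X
  a : C({x : X // x ≠ p}, 𝕜)
  norm_a : ∀ x, ‖a x‖ = 1
  hT : ∀ (f : C(X, 𝕜)) (x : {x : X // x ≠ p}), T f x.1 = a x * f (φ x)

/-- `T` is an isometric shift of type I. -/
def IsTypeI {X : Type*} [TopologicalSpace X] [CompactSpace X]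
    {𝕜 : Type*} [RCLike 𝕜] (T : C(X, 𝕜) →L[𝕜] C(X, 𝕜)) : Prop :=
  Nonempty (TypeIWitness T)

/-- `T` is an isometric shift of type II. -/
def IsTypeII {X : Type*} [TopologicalSpace X] [CompactSpace X]
    {𝕜 : Type*} [RCLike 𝕜] (T : C(X, 𝕜) →L[𝕜] C(X, 𝕜)) : Prop :=
  ∃ (ψ : C(X, X)) (b : C(X, 𝕜)), Function.Surjective ψ ∧ (∀ x, ‖b x‖ = 1) ∧
    ∀ (f : C(X, 𝕜)) (x : X), T f x = b x * f (ψ x)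

namespace TypeIWitness

variable {X : Type*} [TopologicalSpace X] [CompactSpace X] {𝕜 : Type*} [RCLike 𝕜]
  {T : C(X, 𝕜) →L[𝕜] C(X, 𝕜)}

/-- The sequence `𝐧₁ = p`, `𝐧_{k+1} = φ⁻¹(𝐧_k)` (0-indexed: `nseq 0 = p`). -/
def nseq (w : TypeIWitness T) : ℕ → X
  | 0 => w.p
  | k + 1 => (w.φ.symm (nseq w k)).1

/-- The set `𝒩 = {𝐧_k : k ∈ ℕ}`. -/
def NSet (w : TypeIWitness T) : Set X :=
  Set.range w.nseq

/-- `T` (with witness `w`) is non-primitive when `𝒩` is not dense. -/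
def NonPrimitive (w : TypeIWitness T) : Prop :=
  closure w.NSet ≠ Set.univ

open Classical in
/-- Forward iteration map associated to `φ` (defined arbitrarily at `p`). -/
noncomputable def fwd (w : TypeIWitness T) : X → X :=
  fun x => if h : x = w.p then w.p else w.φ ⟨x, h⟩

/-- Backward iteration map associated to `φ`. -/
def bwd (w : TypeIWitness T) : X → X :=
  fun x => (w.φ.symm x).1

/-- The full orbit `{φ^k(x) : k ∈ ℤ}` of a point `x` (for points outside `cl 𝒩`,
where all iterates are genuinely defined). -/
def orbit (w : TypeIWitness T) (x : X) : Set X :=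
  (Set.range fun k : ℕ => w.fwd^[k] x) ∪ (Set.range fun k : ℕ => w.bwd^[k] x)

/-- There are `n` points of `X ∖ cl 𝒩` whose joint `ℤ`-orbit under `φ` is dense in
`X ∖ cl 𝒩`. -/
def GeneratedBy (w : TypeIWitness T) (n : ℕ) : Prop :=
  ∃ x : Fin n → X, (∀ i, x i ∉ closure w.NSet) ∧
    (closure w.NSet)ᶜ ⊆ closure (⋃ i, w.orbit (x i))

/-- `n` is the least number of points of `X ∖ cl 𝒩` whose joint orbit is dense in
`X ∖ cl 𝒩`. -/
def IsNGenerated (w : TypeIWitness T) (n : ℕ) : Prop :=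
  w.GeneratedBy n ∧ ∀ m < n, ¬w.GeneratedBy m

/-- `T` (with witness `w`) is `∞`-generated. -/
def InftyGenerated (w : TypeIWitness T) : Prop :=
  ∀ n : ℕ, ¬w.GeneratedBy n

end TypeIWitness

namespace Stmt18Aux

variable {Y₀ : Type} [TopologicalSpace Y₀] {m : ℕ} (φ₀ : Y₀ ≃ₜ Y₀)

/-- The cyclic-with-twist homeomorphism on `Fin (m+1) × Y₀`. -/
def beta (m : ℕ) : (Fin (m+1) × Y₀) ≃ₜ (Fin (m+1) × Y₀) where
  toFun z := (z.1 - 1, if z.1 = 0 then φ₀ z.2 else z.2)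
  invFun z := (z.1 + 1, if z.1 + 1 = 0 then φ₀.symm z.2 else z.2)
  left_inv z := by
    obtain ⟨i, y⟩ := z
    simp only [sub_add_cancel]
    by_cases h : i = 0 <;> simp [h]
  right_inv z := by
    obtain ⟨i, y⟩ := z
    simp only [add_sub_cancel_right]
    by_cases h : i + 1 = 0 <;> simp [h]
  continuous_toFun := by
    refine Continuous.prodMk ?_ ?_
    · exact (continuous_of_discreteTopology (f := fun i : Fin (m+1) => i - 1)).comp
        continuous_fst
    · refine Continuous.if ?_ (φ₀.continuous.comp continuous_snd) continuous_snd
      intro a ha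
      have : IsClopen {a : Fin (m+1) × Y₀ | a.1 = 0} :=
        (isClopen_discrete {(0 : Fin (m+1))}).preimage continuous_fst
      rw [this.frontier_eq] at ha
      exact ha.elim
  continuous_invFun := by
    refine Continuous.prodMk ?_ ?_
    · exact (continuous_of_discreteTopology (f := fun i : Fin (m+1) => i + 1)).comp
        continuous_fst
    · refine Continuous.if ?_ (φ₀.symm.continuous.comp continuous_snd) continuous_snd
      intro a ha
      have : IsClopen {a : Fin (m+1) × Y₀ | a.1 + 1 = 0} :=
        (isClopen_discrete {x : Fin (m+1) | x + 1 = 0}).preimage continuous_fst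
      rw [this.frontier_eq] at ha
      exact ha.elim


/-- The backward orbit sequence. -/
def cseq (m : ℕ) (y₀ : Y₀) : ℕ → Fin (m+1) × Y₀
  | 0 => (0, y₀)
  | j+1 => beta φ₀ m (cseq m y₀ j)

variable {y₀ : Y₀}

open Fin.NatCast Fin.CommRing in
lemma cseq_fst (j : ℕ) : (cseq φ₀ m y₀ j).1 = -(j : Fin (m+1)) := by
  induction j with
  | zero => simp [cseq]
  | succ k ih =>
    show (beta φ₀ m (cseq φ₀ m y₀ k)).1 = _
    simp only [beta, Homeomorph.homeomorph_mk_coe, Equiv.coe_fn_mk, ih]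
    push_cast
    ring

open Fin.NatCast Fin.CommRing in
lemma cseq_snd (j : ℕ) : (cseq φ₀ m y₀ j).2 = (⇑φ₀)^[(j + m) / (m + 1)] y₀ := by
  induction j with
  | zero => simp [cseq, Nat.div_eq_of_lt (Nat.lt_succ_self m)]
  | succ k ih =>
    show (beta φ₀ m (cseq φ₀ m y₀ k)).2 = _
    simp only [beta, Homeomorph.homeomorph_mk_coe, Equiv.coe_fn_mk, ih, cseq_fst]
    have hcond : (-(k : Fin (m+1)) = 0) ↔ ((m+1) ∣ k) := by
      rw [neg_eq_zero, Fin.natCast_eq_zero]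
    by_cases hd : (m+1) ∣ k
    · rw [if_pos (hcond.mpr hd)]
      obtain ⟨q, rfl⟩ := hd
      have h1 : ((m+1) * q + m) / (m + 1) = q := by
        rw [Nat.mul_add_div (by omega)]
        simp [Nat.div_eq_of_lt (Nat.lt_succ_self m)]
      have h2 : ((m+1) * q + 1 + m) / (m + 1) = q + 1 := by
        have : (m+1) * q + 1 + m = (m+1) * (q+1) := by ring
        rw [this, Nat.mul_div_cancel_left _ (by omega)]
      rw [h1, h2, ← Function.iterate_succ_apply' φ₀]
    · rw [if_neg (fun h => hd (hcond.mp h))]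
      have : (k + 1 + m) / (m + 1) = (k + m) / (m + 1) := by
        have h3 : k + 1 + m = (k + m) + 1 := by ring
        rw [h3, Nat.succ_div, if_neg]
        · simp
        · intro h
          have : (m+1) ∣ k := by
            have := (Nat.dvd_add_self_right (m := m+1) (n := k)).mp (by
              have : k + m + 1 = k + (m+1) := by ring
              rwa [this] at h)
            exact this
          exact hd this
      rw [this]

/-- Iterates of a homeomorphism, as homeomorphisms. -/
def hiter : ℕ → (Y₀ ≃ₜ Y₀)
  | 0 => Homeomorph.refl Y₀
  | k+1 => (hiter k).trans φ₀

lemma hiter_coe (k : ℕ) : ⇑(hiter φ₀ k) = (⇑φ₀)^[k] := by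
  induction k with
  | zero => rfl
  | succ k ih =>
    funext x
    show φ₀ (hiter φ₀ k x) = _
    rw [Function.iterate_succ_apply', ih]

lemma tail_dense (hden : Dense (Set.range fun k : ℕ => (⇑φ₀)^[(m+1) * (k + 1)] y₀))
    (M : ℕ) : Dense (Set.range fun k : ℕ => (⇑φ₀)^[(m+1) * (k + 1 + M)] y₀) := by
  have hfun : (fun k : ℕ => (⇑φ₀)^[(m+1) * (k + 1 + M)] y₀)
      = (⇑(hiter φ₀ ((m+1) * M)) ∘ fun k : ℕ => (⇑φ₀)^[(m+1) * (k + 1)] y₀) := by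
    funext k
    simp only [Function.comp_apply, hiter_coe, ← Function.iterate_add_apply]
    congr 1
    ring
  have himg : (Set.range fun k : ℕ => (⇑φ₀)^[(m+1) * (k + 1 + M)] y₀)
      = (hiter φ₀ ((m+1) * M)) '' (Set.range fun k : ℕ => (⇑φ₀)^[(m+1) * (k + 1)] y₀) := by
    rw [hfun, Set.range_comp]
  rw [himg, dense_iff_closure_eq, ← Homeomorph.image_closure,
    dense_iff_closure_eq.mp hden, Set.image_univ,
    Set.range_eq_univ.mpr (hiter φ₀ ((m+1)*M)).surjective]

open Fin.NatCast Fin.CommRing in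
lemma cseq_hits (hden : Dense (Set.range fun k : ℕ => (⇑φ₀)^[(m+1) * (k + 1)] y₀))
    (J : ℕ) (i : Fin (m+1)) (V : Set Y₀) (hV : IsOpen V) (hne : V.Nonempty) :
    ∃ j, J ≤ j ∧ (cseq φ₀ m y₀ (j+1)).1 = i ∧ (cseq φ₀ m y₀ (j+1)).2 ∈ V := by
  obtain ⟨x, ⟨k, rfl⟩, hxV⟩ := (tail_dense φ₀ hden (J+1)).exists_mem_open hV hne
  set e := (m+1) * (k + 1 + (J+1)) with he
  have he1 : J + 2 ≤ e := by
    calc J + 2 ≤ k + 1 + (J + 1) := by omega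
    _ ≤ (m+1) * (k + 1 + (J+1)) := Nat.le_mul_of_pos_left _ (by omega)
  set r := m + 1 - i.val with hr
  have hrge : 1 ≤ r := by have := i.isLt; omega
  have hrle : r ≤ m + 1 := by omega
  refine ⟨(e-1)*(m+1) + r - 1, ?_, ?_, ?_⟩
  · have : e - 1 ≤ (e-1)*(m+1) := Nat.le_mul_of_pos_right _ (by omega)
    omega
  · have hj1 : (e-1)*(m+1) + r - 1 + 1 = (e-1)*(m+1) + r := by omega
    rw [cseq_fst, hj1]
    have hcast : ((r : ℕ) : Fin (m+1)) = -(i : Fin (m+1)) := by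
      rw [hr, Nat.cast_sub (by have := i.isLt; omega), Fin.natCast_self,
        Fin.cast_val_eq_self, zero_sub]
    rw [Nat.cast_add, Nat.cast_mul, Fin.natCast_self, mul_zero, zero_add, hcast, neg_neg]
  · have hj1 : (e-1)*(m+1) + r - 1 + 1 = (e-1)*(m+1) + r := by omega
    rw [cseq_snd, hj1]
    have hexp : ((e-1)*(m+1) + r + m) / (m+1) = e := by
      have h4 : (e-1)*(m+1) + r + m = (m+1) * (e-1) + (r + m) := by ring
      rw [h4, Nat.mul_add_div (by omega)]
      have hdv : (r + m) / (m+1) = 1 :=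
        Nat.div_eq_of_lt_le (by omega) (by omega)
      omega
    rw [hexp]
    exact hxV


open OnePoint in
/-- The underlying set of the compactification space. -/
def XSet (m : ℕ) (y₀ : Y₀) : Set ((Fin (m+1) × Y₀) × OnePoint ℕ) :=
  {x | ∀ j : ℕ, x.2 = (j : OnePoint ℕ) → x.1 = cseq φ₀ m y₀ (j+1)}

section Space

variable [T2Space Y₀] [CompactSpace Y₀]

open OnePoint

lemma isClosed_XSet : IsClosed (XSet φ₀ m y₀) := by
  rw [← isOpen_compl_iff, isOpen_iff_mem_nhds]
  intro x hx
  simp only [XSet, Set.mem_compl_iff, Set.mem_setOf_eq, not_forall] at hx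
  obtain ⟨j, hj, hne⟩ := hx
  have hopen : IsOpen (({cseq φ₀ m y₀ (j+1)}ᶜ : Set (Fin (m+1) × Y₀)) ×ˢ
      ({((j : ℕ) : OnePoint ℕ)} : Set (OnePoint ℕ))) := by
    refine IsOpen.prod isOpen_compl_singleton ?_
    rw [OnePoint.isOpen_iff_of_notMem (by simp [OnePoint.infty_ne_coe])]
    exact isOpen_discrete _
  refine Filter.mem_of_superset (hopen.mem_nhds ?_) ?_
  · exact ⟨hne, by simp [hj]⟩
  · rintro y ⟨hy1, hy2⟩ hy
    exact hy1 (hy j (by simpa using hy2))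

/-- The compactification space itself. -/
def Xsp (m : ℕ) (y₀ : Y₀) : Type := ↥(XSet φ₀ m y₀)

instance : TopologicalSpace (Xsp φ₀ m y₀) := by unfold Xsp; infer_instance

instance : T2Space (Xsp φ₀ m y₀) := by unfold Xsp; infer_instance

instance : CompactSpace (Xsp φ₀ m y₀) := by
  unfold Xsp
  exact isCompact_iff_compactSpace.mp (isClosed_XSet φ₀).isCompact

/-- The isolated points. -/
def nn (j : ℕ) : Xsp φ₀ m y₀ :=
  ⟨(cseq φ₀ m y₀ (j+1), ((j : ℕ) : OnePoint ℕ)), by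
    intro j' hj'
    rw [OnePoint.coe_eq_coe] at hj'
    rw [hj']⟩

/-- The copy of `Z` at infinity. -/
def zpt (z : Fin (m+1) × Y₀) : Xsp φ₀ m y₀ :=
  ⟨(z, (∞ : OnePoint ℕ)), by intro j hj; exact absurd hj (OnePoint.infty_ne_coe j)⟩

lemma cases_Xsp (x : Xsp φ₀ m y₀) : (∃ j : ℕ, x = nn φ₀ j) ∨ ∃ z, x = zpt φ₀ z := by
  obtain ⟨⟨z, t⟩, hx⟩ := x
  induction t using OnePoint.rec with
  | infty => exact Or.inr ⟨z, rfl⟩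
  | coe j =>
    refine Or.inl ⟨j, ?_⟩
    have := hx j rfl
    exact Subtype.ext (Prod.ext this rfl)

lemma nn_ne_zpt (j : ℕ) (z : Fin (m+1) × Y₀) : nn φ₀ (m := m) (y₀ := y₀) j ≠ zpt φ₀ z := by
  intro h
  have := congrArg (fun x => (Subtype.val x).2) h
  exact OnePoint.coe_ne_infty j this

lemma nn_injective : Function.Injective (nn φ₀ (m := m) (y₀ := y₀)) := by
  intro j j' h
  have := congrArg (fun x => (Subtype.val x).2) h
  simp only [nn] at this
  rwa [OnePoint.coe_eq_coe] at this

lemma zpt_injective : Function.Injective (zpt φ₀ (m := m) (y₀ := y₀)) := by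
  intro z z' h
  have := congrArg (fun x => (Subtype.val x).1) h
  exact this

lemma continuous_zpt : Continuous (zpt φ₀ (m := m) (y₀ := y₀)) := by
  apply Continuous.subtype_mk
  exact Continuous.prodMk continuous_id continuous_const

/-- The backward map on `X`. -/
def bwdX (x : Xsp φ₀ m y₀) : Xsp φ₀ m y₀ :=
  ⟨(beta φ₀ m x.1.1, OnePoint.map Nat.succ x.1.2), by
    obtain ⟨⟨z, t⟩, hx⟩ := x
    induction t using OnePoint.rec with
    | infty => intro j hj; exact absurd hj (OnePoint.infty_ne_coe j)
    | coe j' =>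
      intro j hj
      simp only [OnePoint.map_some, OnePoint.coe_eq_coe] at hj
      subst hj
      have hz : z = cseq φ₀ m y₀ (j'+1) := hx j' rfl
      simp only [hz]
      rfl⟩

lemma continuous_bwdX : Continuous (bwdX φ₀ (m := m) (y₀ := y₀)) := by
  apply Continuous.subtype_mk
  refine Continuous.prodMk ?_ ?_
  · exact (beta φ₀ m).continuous.comp ((continuous_fst).comp continuous_subtype_val)
  · refine (OnePoint.continuous_map continuous_of_discreteTopology ?_).comp
      ((continuous_snd).comp continuous_subtype_val)
    rw [Filter.coclosedCompact_eq_cocompact, cocompact_eq_atTop (α := ℕ)]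
    exact Filter.tendsto_add_atTop_nat 1

lemma bwdX_nn (j : ℕ) : bwdX φ₀ (nn φ₀ (m := m) (y₀ := y₀) j) = nn φ₀ (j+1) := by
  apply Subtype.ext
  simp only [bwdX, nn]
  exact Prod.ext rfl rfl

lemma bwdX_zpt (z : Fin (m+1) × Y₀) :
    bwdX φ₀ (zpt φ₀ (m := m) (y₀ := y₀) z) = zpt φ₀ (beta φ₀ m z) := rfl

/-- The distinguished point. -/
def pp : Xsp φ₀ m y₀ := nn φ₀ 0

lemma isolated_pp : IsOpen ({pp φ₀ (m := m) (y₀ := y₀)} : Set (Xsp φ₀ m y₀)) := by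
  have heq : ({pp φ₀ (m := m) (y₀ := y₀)} : Set (Xsp φ₀ m y₀))
      = Subtype.val ⁻¹' (Set.univ ×ˢ ({(((0:ℕ) : OnePoint ℕ))} : Set (OnePoint ℕ))) := by
    ext x
    simp only [Set.mem_singleton_iff, Set.mem_preimage, Set.mem_prod, Set.mem_univ, true_and]
    constructor
    · rintro rfl; exact ⟨trivial, rfl⟩
    · intro hx
      obtain ⟨⟨z, t⟩, hm⟩ := x
      have hx : t = (((0:ℕ) : OnePoint ℕ)) := hx.2
      have hz := hm 0 hx
      exact Subtype.ext (Prod.ext hz hx)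
  rw [heq]
  refine IsOpen.preimage continuous_subtype_val (IsOpen.prod isOpen_univ ?_)
  rw [OnePoint.isOpen_iff_of_notMem (by simp [OnePoint.infty_ne_coe])]
  exact isOpen_discrete _

lemma ne_pp_coe {u : Xsp φ₀ m y₀} (h : u ≠ pp φ₀) {j : ℕ}
    (ht : u.1.2 = ((j : ℕ) : OnePoint ℕ)) : j ≠ 0 := by
  rintro rfl
  exact h (Subtype.ext (Prod.ext (u.2 0 ht) ht))

/-- The forward map on the ambient space. -/
def fwdA (q : (Fin (m+1) × Y₀) × OnePoint ℕ) : (Fin (m+1) × Y₀) × OnePoint ℕ :=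
  ((beta φ₀ m).symm q.1, OnePoint.map (· - 1) q.2)

lemma continuous_fwdA : Continuous (fwdA φ₀ (m := m) (Y₀ := Y₀)) := by
  refine Continuous.prodMk ((beta φ₀ m).symm.continuous.comp continuous_fst) ?_
  refine (OnePoint.continuous_map continuous_of_discreteTopology ?_).comp continuous_snd
  rw [Filter.coclosedCompact_eq_cocompact, cocompact_eq_atTop (α := ℕ)]
  exact Filter.tendsto_sub_atTop_nat 1

/-- The homeomorphism `X ∖ {p} ≃ₜ X`. -/
def phiX : {x : Xsp φ₀ m y₀ // x ≠ pp φ₀} ≃ₜ Xsp φ₀ m y₀ where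
  toFun u := ⟨fwdA φ₀ u.1.1, by
    obtain ⟨⟨⟨z, t⟩, hm⟩, hu⟩ := u
    induction t using OnePoint.rec with
    | infty => intro j hj; exact absurd hj (OnePoint.infty_ne_coe j)
    | coe j' =>
      intro j hj
      have hj'0 : j' ≠ 0 := ne_pp_coe φ₀ hu rfl
      obtain ⟨k, rfl⟩ := Nat.exists_eq_succ_of_ne_zero hj'0
      simp only [fwdA, OnePoint.map_some, OnePoint.coe_eq_coe] at hj
      have hjk : j = k := by omega
      subst hjk
      have hz : z = cseq φ₀ m y₀ (j+1+1) := hm (j+1) rfl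
      show (beta φ₀ m).symm z = _
      rw [hz]
      show (beta φ₀ m).symm (beta φ₀ m (cseq φ₀ m y₀ (j+1))) = _
      rw [Homeomorph.symm_apply_apply]⟩
  invFun x := ⟨bwdX φ₀ x, by
    intro hc
    have h2 := congrArg (fun v => (Subtype.val v).2) hc
    simp only [bwdX, pp, nn] at h2
    obtain ⟨⟨z, t⟩, hm⟩ := x
    induction t using OnePoint.rec with
    | infty => exact OnePoint.infty_ne_coe 0 h2
    | coe j =>
      simp only [OnePoint.map_some, OnePoint.coe_eq_coe] at h2
      exact Nat.succ_ne_zero j h2⟩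
  left_inv u := by
    apply Subtype.ext
    apply Subtype.ext
    obtain ⟨⟨⟨z, t⟩, hm⟩, hu⟩ := u
    refine Prod.ext (Homeomorph.apply_symm_apply _ _) ?_
    show OnePoint.map (· + 1) (OnePoint.map (· - 1) t) = t
    induction t using OnePoint.rec with
    | infty => rfl
    | coe j =>
      have hj0 : j ≠ 0 := ne_pp_coe φ₀ hu rfl
      simp only [OnePoint.map_some, OnePoint.coe_eq_coe]
      omega
  right_inv x := by
    apply Subtype.ext
    refine Prod.ext (Homeomorph.symm_apply_apply _ _) ?_
    show OnePoint.map (· - 1) (OnePoint.map (· + 1) x.1.2) = x.1.2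
    induction x.1.2 using OnePoint.rec with
    | infty => rfl
    | coe j =>
      simp only [OnePoint.map_some, OnePoint.coe_eq_coe]
      omega
  continuous_toFun := by
    apply Continuous.subtype_mk
    exact (continuous_fwdA φ₀).comp (continuous_subtype_val.comp continuous_subtype_val)
  continuous_invFun := by
    apply Continuous.subtype_mk
    exact continuous_bwdX φ₀

lemma phiX_nn (j : ℕ) (h : nn φ₀ (m := m) (y₀ := y₀) (j+1) ≠ pp φ₀) :
    phiX φ₀ ⟨nn φ₀ (j+1), h⟩ = nn φ₀ j := by
  apply Subtype.ext
  show fwdA φ₀ (cseq φ₀ m y₀ (j+2), _) = _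
  refine Prod.ext ?_ ?_
  · show (beta φ₀ m).symm (cseq φ₀ m y₀ (j+2)) = cseq φ₀ m y₀ (j+1)
    show (beta φ₀ m).symm (beta φ₀ m (cseq φ₀ m y₀ (j+1))) = _
    rw [Homeomorph.symm_apply_apply]
  · show OnePoint.map (· - 1) (((j+1 : ℕ) : OnePoint ℕ)) = ((j : ℕ) : OnePoint ℕ)
    simp only [OnePoint.map_some, OnePoint.coe_eq_coe]
    omega

lemma phiX_zpt (z : Fin (m+1) × Y₀) (h : zpt φ₀ (m := m) (y₀ := y₀) z ≠ pp φ₀) :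
    phiX φ₀ ⟨zpt φ₀ z, h⟩ = zpt φ₀ ((beta φ₀ m).symm z) := by
  apply Subtype.ext
  exact Prod.ext rfl rfl

lemma phiX_symm_apply (x : Xsp φ₀ m y₀) : ((phiX φ₀).symm x).1 = bwdX φ₀ x := rfl

lemma nn_ne_pp (j : ℕ) : nn φ₀ (m := m) (y₀ := y₀) (j+1) ≠ pp φ₀ := by
  intro h
  exact Nat.succ_ne_zero j (nn_injective φ₀ h)

lemma zpt_ne_pp (z : Fin (m+1) × Y₀) : zpt φ₀ (m := m) (y₀ := y₀) z ≠ pp φ₀ :=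
  fun h => nn_ne_zpt φ₀ 0 z h.symm

section Op

open scoped Classical

variable (𝕂 : Type) [RCLike 𝕂]

/-- The shift, as a bare function. -/
noncomputable def Tfun (f : C(Xsp φ₀ m y₀, 𝕂)) : Xsp φ₀ m y₀ → 𝕂 := fun x =>
  if h : x = pp φ₀ then (2⁻¹ : 𝕂) * f (zpt φ₀ (cseq φ₀ m y₀ 0)) else f (phiX φ₀ ⟨x, h⟩)

lemma continuous_Tfun (f : C(Xsp φ₀ m y₀, 𝕂)) : Continuous (Tfun φ₀ 𝕂 f) := by
  rw [continuous_iff_continuousAt]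
  intro x
  by_cases hx : x = pp φ₀
  · subst hx
    apply Filter.EventuallyEq.continuousAt (y := (2⁻¹ : 𝕂) * f (zpt φ₀ (cseq φ₀ m y₀ 0)))
    filter_upwards [(isolated_pp φ₀).mem_nhds rfl] with z hz
    rw [Set.mem_singleton_iff] at hz
    subst hz
    exact dif_pos rfl
  · have hU : IsOpen {y : Xsp φ₀ m y₀ | y ≠ pp φ₀} := isOpen_compl_singleton
    refine ContinuousOn.continuousAt ?_ (hU.mem_nhds hx)
    rw [continuousOn_iff_continuous_restrict]
    have hres : Set.domRestrict {y : Xsp φ₀ m y₀ | y ≠ pp φ₀} (Tfun φ₀ 𝕂 f)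
        = fun u : {y : Xsp φ₀ m y₀ // y ≠ pp φ₀} => f (phiX φ₀ u) := by
      funext u
      exact dif_neg u.2
    rw [hres]
    exact f.continuous.comp (phiX φ₀).continuous

/-- The shift as a linear map. -/
noncomputable def TL : C(Xsp φ₀ m y₀, 𝕂) →ₗ[𝕂] C(Xsp φ₀ m y₀, 𝕂) where
  toFun f := ⟨Tfun φ₀ 𝕂 f, continuous_Tfun φ₀ 𝕂 f⟩
  map_add' f g := by
    ext x
    show Tfun φ₀ 𝕂 (f + g) x = Tfun φ₀ 𝕂 f x + Tfun φ₀ 𝕂 g x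
    by_cases h : x = pp φ₀ <;> simp only [Tfun, dif_pos, dif_neg, h,
      ContinuousMap.add_apply, dite_true, dite_false]
    ring
  map_smul' k f := by
    ext x
    show Tfun φ₀ 𝕂 (k • f) x = k * Tfun φ₀ 𝕂 f x
    by_cases h : x = pp φ₀ <;> simp only [Tfun, dif_pos, dif_neg, h,
      ContinuousMap.smul_apply, smul_eq_mul, dite_true, dite_false]
    ring

lemma norm_two_inv : ‖(2⁻¹ : 𝕂)‖ = 2⁻¹ := by
  rw [norm_inv, RCLike.norm_ofNat]

lemma TL_norm_le (f : C(Xsp φ₀ m y₀, 𝕂)) : ‖TL φ₀ 𝕂 f‖ ≤ ‖f‖ := by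
  refine (ContinuousMap.norm_le _ (norm_nonneg f)).mpr fun x => ?_
  show ‖Tfun φ₀ 𝕂 f x‖ ≤ ‖f‖
  by_cases h : x = pp φ₀
  · rw [Tfun, dif_pos h, norm_mul, norm_two_inv]
    calc 2⁻¹ * ‖f (zpt φ₀ (cseq φ₀ m y₀ 0))‖ ≤ 1 * ‖f‖ := by
          have := f.norm_coe_le_norm (zpt φ₀ (cseq φ₀ m y₀ 0))
          nlinarith [norm_nonneg (f (zpt φ₀ (cseq φ₀ m y₀ 0)))]
    _ = ‖f‖ := one_mul _
  · rw [Tfun, dif_neg h]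
    exact f.norm_coe_le_norm _

/-- The shift operator. -/
noncomputable def TCLM : C(Xsp φ₀ m y₀, 𝕂) →L[𝕂] C(Xsp φ₀ m y₀, 𝕂) :=
  LinearMap.mkContinuous (TL φ₀ 𝕂) 1 (fun f => by simpa using TL_norm_le φ₀ 𝕂 f)

lemma TCLM_apply_pp (f : C(Xsp φ₀ m y₀, 𝕂)) :
    TCLM φ₀ 𝕂 f (pp φ₀) = (2⁻¹ : 𝕂) * f (zpt φ₀ (cseq φ₀ m y₀ 0)) := dif_pos rfl

lemma TCLM_apply_ne (f : C(Xsp φ₀ m y₀, 𝕂)) (x : Xsp φ₀ m y₀) (h : x ≠ pp φ₀) :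
    TCLM φ₀ 𝕂 f x = f (phiX φ₀ ⟨x, h⟩) := dif_neg h

lemma eq_comp_bwdX {f g : C(Xsp φ₀ m y₀, 𝕂)} (h : TCLM φ₀ 𝕂 f = g) (y : Xsp φ₀ m y₀) :
    f y = g (bwdX φ₀ y) := by
  set u := (phiX φ₀).symm y with hu
  have h1 : phiX φ₀ u = y := (phiX φ₀).apply_symm_apply y
  have h2 : f (phiX φ₀ u) = TCLM φ₀ 𝕂 f u.1 := by
    rw [TCLM_apply_ne φ₀ 𝕂 f u.1 u.2, Subtype.coe_eta]
  calc f y = f (phiX φ₀ u) := by rw [h1]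
    _ = TCLM φ₀ 𝕂 f u.1 := h2
    _ = g u.1 := by rw [h]
    _ = g (bwdX φ₀ y) := congrArg g (phiX_symm_apply φ₀ y)

lemma TCLM_isometry (f : C(Xsp φ₀ m y₀, 𝕂)) : ‖TCLM φ₀ 𝕂 f‖ = ‖f‖ := by
  refine le_antisymm (TL_norm_le φ₀ 𝕂 f) ?_
  refine (ContinuousMap.norm_le _ (norm_nonneg _)).mpr fun y => ?_
  have := eq_comp_bwdX φ₀ 𝕂 (rfl : TCLM φ₀ 𝕂 f = TCLM φ₀ 𝕂 f) y
  rw [this]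
  exact (TCLM φ₀ 𝕂 f).norm_coe_le_norm _

/-- The codimension-one functional. -/
noncomputable def Phi : C(Xsp φ₀ m y₀, 𝕂) →ₗ[𝕂] 𝕂 where
  toFun g := g (pp φ₀) - (2⁻¹ : 𝕂) * g (zpt φ₀ (cseq φ₀ m y₀ 1))
  map_add' f g := by simp only [ContinuousMap.add_apply]; ring
  map_smul' k f := by simp only [ContinuousMap.smul_apply, smul_eq_mul, RingHom.id_apply]; ring

lemma range_TL : LinearMap.range (TL φ₀ (m := m) (y₀ := y₀) 𝕂)
    = LinearMap.ker (Phi φ₀ (m := m) (y₀ := y₀) 𝕂) := by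
  apply le_antisymm
  · rintro g ⟨f, rfl⟩
    show Phi φ₀ 𝕂 (TCLM φ₀ 𝕂 f) = 0
    show TCLM φ₀ 𝕂 f (pp φ₀) - (2⁻¹ : 𝕂) * TCLM φ₀ 𝕂 f (zpt φ₀ (cseq φ₀ m y₀ 1)) = 0
    rw [TCLM_apply_pp, TCLM_apply_ne φ₀ 𝕂 f _ (zpt_ne_pp φ₀ _), phiX_zpt]
    have hb : (beta φ₀ m).symm (cseq φ₀ m y₀ 1) = cseq φ₀ m y₀ 0 := by
      show (beta φ₀ m).symm (beta φ₀ m (cseq φ₀ m y₀ 0)) = cseq φ₀ m y₀ 0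
      rw [Homeomorph.symm_apply_apply]
    rw [hb]
    ring
  · intro g hg
    rw [LinearMap.mem_ker] at hg
    have hg' : g (pp φ₀) = (2⁻¹ : 𝕂) * g (zpt φ₀ (cseq φ₀ m y₀ 1)) := by
      have := sub_eq_zero.mp hg
      exact this
    refine ⟨g.comp ⟨bwdX φ₀, continuous_bwdX φ₀⟩, ?_⟩
    ext x
    show Tfun φ₀ 𝕂 _ x = g x
    by_cases h : x = pp φ₀
    · rw [Tfun, dif_pos h, h]
      show (2⁻¹ : 𝕂) * g (bwdX φ₀ (zpt φ₀ (cseq φ₀ m y₀ 0))) = _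
      rw [bwdX_zpt]
      exact hg'.symm
    · rw [Tfun, dif_neg h]
      show g (bwdX φ₀ (phiX φ₀ ⟨x, h⟩)) = g x
      have : bwdX φ₀ (phiX φ₀ ⟨x, h⟩) = x := by
        have := (phiX φ₀).symm_apply_apply ⟨x, h⟩
        have h2 := congrArg Subtype.val this
        rw [phiX_symm_apply] at h2
        exact h2
      rw [this]

lemma Phi_surjective : Function.Surjective (Phi φ₀ (m := m) (y₀ := y₀) 𝕂) := by
  intro k
  refine ⟨(2 * k) • (1 : C(Xsp φ₀ m y₀, 𝕂)), ?_⟩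
  show (2*k) • (1 : C(Xsp φ₀ m y₀, 𝕂)) (pp φ₀)
      - (2⁻¹ : 𝕂) * ((2*k) • (1 : C(Xsp φ₀ m y₀, 𝕂)) (zpt φ₀ (cseq φ₀ m y₀ 1))) = k
  simp only [ContinuousMap.one_apply, smul_eq_mul, mul_one]
  have h2 : (2⁻¹ : 𝕂) * 2 = 1 := by norm_num
  calc 2 * k - 2⁻¹ * (2 * k) = (1 - 2⁻¹ * 2) * k + k := by ring
  _ = k := by rw [h2]; ring

lemma rank_quot :
    Module.rank 𝕂 (C(Xsp φ₀ m y₀, 𝕂) ⧸ LinearMap.range ((TCLM φ₀ (m := m) (y₀ := y₀) 𝕂 :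
      C(Xsp φ₀ m y₀, 𝕂) →ₗ[𝕂] C(Xsp φ₀ m y₀, 𝕂)))) = 1 := by
  have hc : (TCLM φ₀ (m := m) (y₀ := y₀) 𝕂 : C(Xsp φ₀ m y₀, 𝕂) →ₗ[𝕂] C(Xsp φ₀ m y₀, 𝕂))
      = TL φ₀ 𝕂 := rfl
  rw [hc, range_TL]
  have e := LinearMap.quotKerEquivOfSurjective (Phi φ₀ (m := m) (y₀ := y₀) 𝕂)
    (Phi_surjective φ₀ 𝕂)
  rw [e.rank_eq]; exact Module.rank_self 𝕂

lemma mem_range_iter (k : ℕ) :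
    ∀ g : C(Xsp φ₀ m y₀, 𝕂), g ∈ Set.range ((⇑(TCLM φ₀ (m := m) (y₀ := y₀) 𝕂))^[k]) →
    ∀ j < k, g (nn φ₀ j) = (2⁻¹ : 𝕂) * g (zpt φ₀ (cseq φ₀ m y₀ (j+1))) := by
  induction k with
  | zero => intro g _ j hj; omega
  | succ k ih =>
    rintro g ⟨h, rfl⟩
    rw [Function.iterate_succ_apply']
    set f := (⇑(TCLM φ₀ (m := m) (y₀ := y₀) 𝕂))^[k] h with hf
    have hfmem : f ∈ Set.range ((⇑(TCLM φ₀ (m := m) (y₀ := y₀) 𝕂))^[k]) := ⟨h, rfl⟩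
    have hcomp : ∀ y, f y = (TCLM φ₀ 𝕂 f) (bwdX φ₀ y) :=
      eq_comp_bwdX φ₀ 𝕂 rfl
    intro j hj
    match j with
    | 0 =>
      show TCLM φ₀ 𝕂 f (pp φ₀) = _
      rw [TCLM_apply_pp, hcomp (zpt φ₀ (cseq φ₀ m y₀ 0)), bwdX_zpt]
      rfl
    | j + 1 =>
      rw [TCLM_apply_ne φ₀ 𝕂 f _ (nn_ne_pp φ₀ j), phiX_nn φ₀ j,
        ih f hfmem j (by omega), hcomp (zpt φ₀ (cseq φ₀ m y₀ (j+1))), bwdX_zpt]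
      rfl

lemma vanish (hden : Dense (Set.range fun k : ℕ => (⇑φ₀)^[(m+1) * (k + 1)] y₀))
    (g : C(Xsp φ₀ m y₀, 𝕂))
    (hrel : ∀ j : ℕ, g (nn φ₀ j) = (2⁻¹ : 𝕂) * g (zpt φ₀ (cseq φ₀ m y₀ (j+1)))) :
    g = 0 := by
  have hz0 : ∀ z, g (zpt φ₀ z) = 0 := by
    by_contra hc
    push_neg at hc
    obtain ⟨z1, hz1⟩ := hc
    have hcont : Continuous fun z : Fin (m+1) × Y₀ => ‖g (zpt φ₀ z)‖ :=
      (g.continuous.comp (continuous_zpt φ₀)).norm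
    obtain ⟨zs, _, hzs'⟩ := isCompact_univ.exists_isMaxOn (⟨(0, y₀), Set.mem_univ _⟩ :
      (Set.univ : Set (Fin (m+1) × Y₀)).Nonempty) hcont.continuousOn
    have hzs : ∀ z : Fin (m+1) × Y₀, ‖g (zpt φ₀ z)‖ ≤ ‖g (zpt φ₀ zs)‖ :=
      fun z => hzs' (Set.mem_univ z)
    set M := ‖g (zpt φ₀ zs)‖ with hM
    have hMpos : 0 < M := lt_of_lt_of_le (norm_pos_iff.mpr hz1) (hzs z1)
    set W : Set (Xsp φ₀ m y₀) := {x | ‖g x - g (zpt φ₀ zs)‖ < M/4} with hW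
    have hWopen : IsOpen W := by
      have : Continuous fun x : Xsp φ₀ m y₀ => ‖g x - g (zpt φ₀ zs)‖ :=
        (g.continuous.sub continuous_const).norm
      exact isOpen_Iio.preimage this
    obtain ⟨W', hW'open, hW'⟩ := isOpen_induced_iff.mp hWopen
    have hmemW' : ((zs, (∞ : OnePoint ℕ)) : (Fin (m+1) × Y₀) × OnePoint ℕ) ∈ W' := by
      have : zpt φ₀ (m := m) (y₀ := y₀) zs ∈ W := by
        simp only [hW, Set.mem_setOf_eq, sub_self, norm_zero]
        positivity
      rw [← hW'] at this
      exact this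
    obtain ⟨U, V, hUopen, hVopen, hzsU, hinfV, hUV⟩ := isOpen_prod_iff.mp hW'open zs ∞ hmemW'
    obtain ⟨A, B, hAopen, hBopen, hzsA, hzsB, hAB⟩ := isOpen_prod_iff.mp hUopen zs.1 zs.2 hzsU
    obtain ⟨_, hVcomp⟩ := (OnePoint.isOpen_iff_of_mem hinfV).mp hVopen
    have hfin : (((↑) : ℕ → OnePoint ℕ) ⁻¹' V)ᶜ.Finite :=
      hVcomp.finite_of_discrete
    obtain ⟨J, hJ⟩ := hfin.bddAbove
    obtain ⟨j, hjJ, hj1, hj2⟩ := cseq_hits φ₀ hden (J+1) zs.1 B hBopen ⟨zs.2, hzsB⟩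
    have hjV : ((j : ℕ) : OnePoint ℕ) ∈ V := by
      by_contra hnot
      have : j ∈ (((↑) : ℕ → OnePoint ℕ) ⁻¹' V)ᶜ := hnot
      have := hJ this
      omega
    have hcU : cseq φ₀ m y₀ (j+1) ∈ U := hAB ⟨hj1 ▸ hzsA, hj2⟩
    have hnnW : nn φ₀ (m := m) (y₀ := y₀) j ∈ W := by
      rw [← hW']
      exact hUV ⟨hcU, hjV⟩
    have hbound : ‖g (nn φ₀ j)‖ ≤ 2⁻¹ * M := by
      rw [hrel j, norm_mul, norm_two_inv]
      have := hzs (cseq φ₀ m y₀ (j+1))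
      nlinarith [norm_nonneg (g (zpt φ₀ (cseq φ₀ m y₀ (j+1))))]
    have hclose : ‖g (nn φ₀ j) - g (zpt φ₀ zs)‖ < M/4 := hnnW
    have : M ≤ ‖g (zpt φ₀ zs) - g (nn φ₀ j)‖ + ‖g (nn φ₀ j)‖ := by
      calc M = ‖g (zpt φ₀ zs)‖ := rfl
      _ = ‖(g (zpt φ₀ zs) - g (nn φ₀ j)) + g (nn φ₀ j)‖ := by ring_nf
      _ ≤ _ := norm_add_le _ _
    rw [norm_sub_rev] at this
    linarith
  have hnn0 : ∀ j, g (nn φ₀ (m := m) (y₀ := y₀) j) = 0 := fun j => by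
    rw [hrel j, hz0, mul_zero]
  ext x
  rcases cases_Xsp φ₀ x with ⟨j, rfl⟩ | ⟨z, rfl⟩
  · rw [hnn0 j]; rfl
  · rw [hz0 z]; rfl

lemma iInter_eq (hden : Dense (Set.range fun k : ℕ => (⇑φ₀)^[(m+1) * (k + 1)] y₀)) :
    (⋂ k : ℕ, Set.range ((⇑(TCLM φ₀ (m := m) (y₀ := y₀) 𝕂))^[k + 1]))
      = {(0 : C(Xsp φ₀ m y₀, 𝕂))} := by
  apply Set.eq_singleton_iff_unique_mem.mpr
  constructor
  · refine Set.mem_iInter.mpr fun k => ⟨0, ?_⟩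
    exact Function.iterate_fixed (map_zero _) (k+1)
  · intro g hg
    refine vanish φ₀ 𝕂 hden g fun j => ?_
    exact mem_range_iter φ₀ 𝕂 (j+1) g (Set.mem_iInter.mp hg j) j (by omega)

end Op

end Space


section Witness

variable {Y₀ : Type} [TopologicalSpace Y₀] {m : ℕ} (φ₀ : Y₀ ≃ₜ Y₀) {y₀ : Y₀}
  [T2Space Y₀] [CompactSpace Y₀] (𝕂 : Type) [RCLike 𝕂]

/-- The type I witness. -/
noncomputable def witness : TypeIWitness (TCLM φ₀ (m := m) (y₀ := y₀) 𝕂) where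
  p := pp φ₀
  isolated := isolated_pp φ₀
  φ := phiX φ₀
  a := 1
  norm_a x := by simp
  hT f x := by
    rw [TCLM_apply_ne φ₀ 𝕂 f x.1 x.2, ContinuousMap.one_apply, one_mul, Subtype.coe_eta]

lemma witness_nseq (k : ℕ) : (witness φ₀ (m := m) (y₀ := y₀) 𝕂).nseq k = nn φ₀ k := by
  induction k with
  | zero => rfl
  | succ k ih =>
    show ((witness φ₀ 𝕂).φ.symm ((witness φ₀ 𝕂).nseq k)).1 = _
    rw [ih]
    show bwdX φ₀ (nn φ₀ k) = _
    rw [bwdX_nn]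

lemma witness_NSet : (witness φ₀ (m := m) (y₀ := y₀) 𝕂).NSet
    = Set.range (nn φ₀ (m := m) (y₀ := y₀)) := by
  exact congrArg Set.range (funext (witness_nseq φ₀ 𝕂))

end Witness

section Components

variable {Y₀ : Type} [TopologicalSpace Y₀] {m : ℕ} (φ₀ : Y₀ ≃ₜ Y₀) (y₀ : Y₀)
  [T2Space Y₀] [CompactSpace Y₀]

/-- The subtype `X ∖ 𝒩`, homeomorphic to `Fin (m+1) × Y₀`. -/
def eH : ↥((Set.range (nn φ₀ (m := m) (y₀ := y₀)))ᶜ) ≃ₜ (Fin (m+1) × Y₀) where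
  toFun u := u.1.1.1
  invFun z := ⟨zpt φ₀ z, fun hz => by
    obtain ⟨j, hj⟩ := hz
    exact nn_ne_zpt φ₀ j z hj⟩
  left_inv u := by
    rcases cases_Xsp φ₀ u.1 with ⟨j, hj⟩ | ⟨z, hz⟩
    · exact absurd (hj ▸ Set.mem_range_self j) u.2
    · apply Subtype.ext
      have hz' : u.1.1.1 = z := by rw [hz]; rfl
      show zpt φ₀ u.1.1.1 = u.1
      rw [hz', hz]
  right_inv z := rfl
  continuous_toFun :=
    continuous_fst.comp (continuous_subtype_val.comp continuous_subtype_val)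
  continuous_invFun := (continuous_zpt φ₀).subtype_mk _

lemma homeo_cc {A B : Type} [TopologicalSpace A] [TopologicalSpace B] (h : A ≃ₜ B) (x : A) :
    connectedComponent (h x) = ⇑h '' connectedComponent x := by
  apply Set.Subset.antisymm
  · intro b hb
    have hsub := h.symm.continuous.image_connectedComponent_subset (h x)
    rw [h.symm_apply_apply] at hsub
    exact ⟨h.symm b, hsub ⟨b, hb, rfl⟩, h.apply_symm_apply b⟩
  · exact h.continuous.image_connectedComponent_subset x

variable [ConnectedSpace Y₀]

lemma cc_Z (z : Fin (m+1) × Y₀) :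
    connectedComponent z = ({z.1} : Set (Fin (m+1))) ×ˢ (Set.univ : Set Y₀) := by
  apply Set.Subset.antisymm
  · apply IsClopen.connectedComponent_subset
    · have hpre : ({z.1} : Set (Fin (m+1))) ×ˢ (Set.univ : Set Y₀)
          = Prod.fst ⁻¹' {z.1} := by
        ext w
        exact ⟨fun h => h.1, fun h => ⟨h, trivial⟩⟩
      rw [hpre]
      exact (isClopen_discrete _).preimage continuous_fst
    · exact ⟨rfl, trivial⟩
  · exact (isPreconnected_singleton.prod isPreconnected_univ).subset_connectedComponent
      ⟨rfl, trivial⟩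

/-- The `i`-th nontrivial component of `X ∖ 𝒩`. -/
def CompS (i : Fin (m+1)) : Set ↥((Set.range (nn φ₀ (m := m) (y₀ := y₀)))ᶜ) :=
  ⇑(eH φ₀ y₀).symm '' (({i} : Set (Fin (m+1))) ×ˢ (Set.univ : Set Y₀))

lemma cc_sub (u : ↥((Set.range (nn φ₀ (m := m) (y₀ := y₀)))ᶜ)) :
    connectedComponent u = CompS φ₀ y₀ (eH φ₀ y₀ u).1 := by
  have h1 : u = (eH φ₀ y₀).symm (eH φ₀ y₀ u) := ((eH φ₀ y₀).symm_apply_apply u).symm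
  calc connectedComponent u
      = connectedComponent ((eH φ₀ y₀).symm (eH φ₀ y₀ u)) := by rw [← h1]
    _ = ⇑(eH φ₀ y₀).symm '' connectedComponent (eH φ₀ y₀ u) := homeo_cc _ _
    _ = ⇑(eH φ₀ y₀).symm '' ((({(eH φ₀ y₀ u).1} : Set (Fin (m+1)))) ×ˢ (Set.univ : Set Y₀)) := by
        rw [cc_Z]
    _ = CompS φ₀ y₀ (eH φ₀ y₀ u).1 := rfl

lemma CompS_eq_cc (i : Fin (m+1)) :
    CompS φ₀ y₀ i = connectedComponent ((eH φ₀ y₀).symm (i, y₀)) := by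
  rw [cc_sub φ₀ y₀ ((eH φ₀ y₀).symm (i, y₀)), (eH φ₀ y₀).apply_symm_apply]

lemma CompS_nontrivial [Nontrivial Y₀] (i : Fin (m+1)) : (CompS φ₀ y₀ i).Nontrivial := by
  obtain ⟨y1, y2, hy⟩ := exists_pair_ne Y₀
  refine ⟨(eH φ₀ y₀).symm (i, y1), ⟨(i, y1), ⟨rfl, trivial⟩, rfl⟩,
    (eH φ₀ y₀).symm (i, y2), ⟨(i, y2), ⟨rfl, trivial⟩, rfl⟩, fun h => hy ?_⟩
  have := (eH φ₀ y₀).symm.injective h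
  exact congrArg Prod.snd this

lemma CompS_injective : Function.Injective (CompS φ₀ (m := m) y₀) := by
  intro i i' h
  have hmem : (eH φ₀ y₀).symm (i, y₀) ∈ CompS φ₀ y₀ i := ⟨(i, y₀), ⟨rfl, trivial⟩, rfl⟩
  rw [h] at hmem
  obtain ⟨w, ⟨hw1, _⟩, hw⟩ := hmem
  have hwi : w = (i, y₀) := (eH φ₀ y₀).symm.injective hw
  rw [hwi] at hw1
  simpa using hw1

/-- The slice homeomorphism. -/
def sliceHomeo (i : Fin (m+1)) :
    ↥((({i} : Set (Fin (m+1))) ×ˢ (Set.univ : Set Y₀))) ≃ₜ Y₀ where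
  toFun u := u.1.2
  invFun y := ⟨(i, y), ⟨rfl, trivial⟩⟩
  left_inv u := by
    apply Subtype.ext
    apply Prod.ext
    · exact (Set.mem_singleton_iff.mp u.2.1).symm
    · rfl
  right_inv y := rfl
  continuous_toFun := continuous_snd.comp continuous_subtype_val
  continuous_invFun := Continuous.subtype_mk (continuous_const.prodMk continuous_id) _

end Components

end Stmt18Aux


/-- If a connected compact Hausdorff space `Y₀` with more than one point carries a
homeomorphism `φ₀` with a periodic point and with `φ₀ⁿ` transitive, then there are a
compact Hausdorff space `X` and an isometric shift of type I₀ on `C(X;𝕂)` with weight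
`a ≡ 1`, such that `X ∖ 𝒩` has exactly `n` connected components with more than one
point, each homeomorphic to `Y₀`. -/
theorem stmt18 (n : ℕ) (hn : 0 < n) (𝕂 : Type) [RCLike 𝕂]
    (Y₀ : Type) [TopologicalSpace Y₀] [CompactSpace Y₀] [T2Space Y₀] [ConnectedSpace Y₀]
    [Nontrivial Y₀] (φ₀ : Y₀ ≃ₜ Y₀)
    (hper : ∃ (y : Y₀) (m : ℕ), 0 < m ∧ (⇑φ₀)^[m] y = y)
    (htrans : ∃ y : Y₀, Dense (Set.range fun m : ℕ => (⇑φ₀)^[n * (m + 1)] y)) :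
    ∃ (X : Type) (_ : TopologicalSpace X) (_ : CompactSpace X) (_ : T2Space X)
      (T : C(X, 𝕂) →L[𝕂] C(X, 𝕂)) (w : TypeIWitness T),
      IsIsometricShift T ∧ ¬IsTypeII T ∧ (∀ z, w.a z = 1) ∧
      (∃ g : {C : Set ↥(w.NSetᶜ) | (∃ z, C = connectedComponent z) ∧ C.Nontrivial} ≃ Fin n,
        True) ∧
      ∀ C : {C : Set ↥(w.NSetᶜ) | (∃ z, C = connectedComponent z) ∧ C.Nontrivial},
        Nonempty (↥(C.1) ≃ₜ Y₀) := by
  obtain ⟨m, rfl⟩ : ∃ m, n = m + 1 := ⟨n - 1, by omega⟩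
  obtain ⟨y₀, hden⟩ := htrans
  open Stmt18Aux in
  refine ⟨Xsp φ₀ m y₀, inferInstance, inferInstance, inferInstance,
    TCLM φ₀ (m := m) (y₀ := y₀) 𝕂, witness φ₀ 𝕂, ⟨?_, ?_, ?_⟩, ?_, ?_, ?_, ?_⟩
  · exact fun f => TCLM_isometry φ₀ 𝕂 f
  · exact rank_quot φ₀ 𝕂
  · exact iInter_eq φ₀ 𝕂 hden
  · rintro ⟨ψ, b, hsurj, hb, hTf⟩
    have h1 := hTf 1 (pp φ₀)
    rw [TCLM_apply_pp] at h1
    simp only [ContinuousMap.one_apply, mul_one] at h1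
    have hb1 := hb (pp φ₀)
    rw [← h1, norm_two_inv] at hb1
    norm_num at hb1
  · intro z
    rfl
  · rw [witness_NSet]
    refine ⟨Equiv.symm (Equiv.ofBijective
      (fun i : Fin (m+1) => ⟨CompS φ₀ y₀ i, ⟨(eH φ₀ y₀).symm (i, y₀), CompS_eq_cc φ₀ y₀ i⟩,
        CompS_nontrivial φ₀ y₀ i⟩) ⟨?_, ?_⟩), trivial⟩
    · intro i i' hii
      exact CompS_injective φ₀ y₀ (congrArg Subtype.val hii)
    · rintro ⟨C, ⟨u, hu⟩, hnt⟩
      exact ⟨(eH φ₀ y₀ u).1, Subtype.ext (hu.trans (cc_sub φ₀ y₀ u)).symm⟩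
  · rw [witness_NSet]
    rintro ⟨C, ⟨u, hu⟩, hnt⟩
    have hC : C = CompS φ₀ y₀ (eH φ₀ y₀ u).1 := hu.trans (cc_sub φ₀ y₀ u)
    exact ⟨(Homeomorph.setCongr hC).trans
      (((eH φ₀ y₀).symm.image _).symm.trans (sliceHomeo (eH φ₀ y₀ u).1))⟩
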